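/- arXiv:2201.04041 — 2 statements merged into one kernel-verified Lean document; each statement's English description precedes it below -/
import Mathlib

section
/- Let V be a finite-dimensional complex vector space, let N be a nilpotent linear endomorphism of V, and let x ∈ V. If M₁ and M₂ are N-invariant subspaces of V such that M₁ + M₂ = (N)_x, then M₁ = (N)_x or M₂ = (N)_x. -/
/-!
Write `W = (N)_x`. Since `W = ℂ x + N W`, an invariant subspace `M ≤ W` either contains `x`, and
then equals `W`, or lies in `N W`: otherwise some `m = a x + w ∈ M` with `a ≠ 0` gives
`W ≤ M + N W`, and iterating this inclusion yields `W ≤ M + N^k W = M` once `N^k = 0`. If neither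
`M₁` nor `M₂` equals `W`, then `W = M₁ + M₂ ≤ N W`, so `W = 0` by the same iteration.
-/

open Submodule

/-- A subspace `M` is invariant under the endomorphism `A`. -/
def InvSub {V : Type*} [AddCommGroup V] [Module ℂ V] (A : V →ₗ[ℂ] V)
    (M : Submodule ℂ V) : Prop :=
  M.map A ≤ M

/-- `T ∈ Col(A)`: `T` is bijective and a subspace is `A`-invariant iff its image
under `T` is `A`-invariant. -/
def Col {V : Type*} [AddCommGroup V] [Module ℂ V] (A T : V →ₗ[ℂ] V) : Prop :=
  Function.Bijective T ∧ ∀ M : Submodule ℂ V, InvSub A M ↔ InvSub A (M.map T)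

/-- The cyclic subspace `(A)_x`, i.e. the span of `{A^n x : n ≥ 0}`. -/
def cyc {V : Type*} [AddCommGroup V] [Module ℂ V] (A : V →ₗ[ℂ] V) (x : V) :
    Submodule ℂ V :=
  Submodule.span ℂ (Set.range fun n : ℕ => (A ^ n) x)

section

variable {V : Type*} [AddCommGroup V] [Module ℂ V] {N : V →ₗ[ℂ] V} {M W : Submodule ℂ V}

theorem InvSub.pow (hM : InvSub N M) (n : ℕ) : InvSub (N ^ n) M := by
  induction n with
  | zero => rw [InvSub, pow_zero, Module.End.one_eq_id, map_id]
  | succ n ih =>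
    rw [InvSub, pow_succ', Module.End.mul_eq_comp, map_comp]
    exact (map_mono ih).trans hM

theorem InvSub.cyc_le (hM : InvSub N M) {x : V} (hx : x ∈ M) : cyc N x ≤ M := by
  rw [cyc, span_le]
  rintro _ ⟨n, rfl⟩
  exact hM.pow n (mem_map_of_mem hx)

theorem mem_cyc_self (N : V →ₗ[ℂ] V) (x : V) : x ∈ cyc N x :=
  subset_span ⟨0, by simp⟩

theorem cyc_le_span_singleton_sup_map (N : V →ₗ[ℂ] V) (x : V) :
    cyc N x ≤ span ℂ {x} ⊔ (cyc N x).map N := by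
  rw [cyc, span_le]
  rintro _ ⟨_ | n, rfl⟩
  · exact mem_sup_left (by simp [mem_span_singleton_self])
  · refine mem_sup_right ⟨(N ^ n) x, subset_span ⟨n, rfl⟩, ?_⟩
    show N ((N ^ n) x) = (N ^ (n + 1)) x
    rw [pow_succ', Module.End.mul_apply]

theorem InvSub.le_of_le_sup_map (hN : IsNilpotent N) (hM : InvSub N M)
    (hW : W ≤ M ⊔ W.map N) : W ≤ M := by
  obtain ⟨k, hk⟩ := hN
  have hpow : ∀ n : ℕ, W ≤ M ⊔ W.map (N ^ n) := by
    intro n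
    induction n with
    | zero => rw [pow_zero, Module.End.one_eq_id, map_id]; exact le_sup_right
    | succ n ih =>
      calc W ≤ M ⊔ W.map (N ^ n) := ih
        _ ≤ M ⊔ (M ⊔ W.map N).map (N ^ n) := sup_le_sup_left (map_mono hW) _
        _ = M ⊔ (M.map (N ^ n) ⊔ W.map (N ^ (n + 1))) := by
          rw [Submodule.map_sup, ← map_comp, ← Module.End.mul_eq_comp, ← pow_succ]
        _ ≤ M ⊔ W.map (N ^ (n + 1)) := by
          rw [← sup_assoc, sup_eq_left.2 (hM.pow n)]
  simpa [hk] using hpow k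

theorem InvSub.eq_cyc_or_le_map (hN : IsNilpotent N) (hM : InvSub N M) {x : V}
    (hMx : M ≤ cyc N x) : M = cyc N x ∨ M ≤ (cyc N x).map N := by
  by_cases hx : x ∈ M
  · exact .inl (le_antisymm hMx (hM.cyc_le hx))
  refine .inr fun m hm => ?_
  obtain ⟨_, hu, w, hw, rfl⟩ := mem_sup.1 (cyc_le_span_singleton_sup_map N x (hMx hm))
  obtain ⟨a, rfl⟩ := mem_span_singleton.1 hu
  by_cases ha : a = 0
  · simpa [ha] using hw
  have hxMW : x ∈ M ⊔ (cyc N x).map N := by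
    have hmem : a⁻¹ • (a • x + w) - a⁻¹ • w ∈ M ⊔ (cyc N x).map N :=
      sub_mem (smul_mem _ _ (mem_sup_left hm)) (smul_mem _ _ (mem_sup_right hw))
    rwa [smul_add, smul_smul, inv_mul_cancel₀ ha, one_smul, add_sub_cancel_right] at hmem
  have hle : cyc N x ≤ M ⊔ (cyc N x).map N :=
    (cyc_le_span_singleton_sup_map N x).trans
      (sup_le ((span_singleton_le_iff_mem _ _).2 hxMW) le_sup_right)
  exact absurd (hM.le_of_le_sup_map hN hle (mem_cyc_self N x)) hx

end

theorem stmt3_general {V : Type*} [AddCommGroup V] [Module ℂ V]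
    (N : V →ₗ[ℂ] V) (hN : IsNilpotent N) (x : V)
    (M₁ M₂ : Submodule ℂ V) (hM₁ : InvSub N M₁) (hM₂ : InvSub N M₂)
    (hsum : M₁ ⊔ M₂ = cyc N x) :
    M₁ = cyc N x ∨ M₂ = cyc N x := by
  rcases hM₁.eq_cyc_or_le_map hN (hsum ▸ le_sup_left) with h₁ | h₁
  · exact .inl h₁
  rcases hM₂.eq_cyc_or_le_map hN (hsum ▸ le_sup_right) with h₂ | h₂
  · exact .inr h₂
  have hbot : InvSub N ⊥ := by simp [InvSub]
  have hcyc : cyc N x ≤ ⊥ :=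
    hbot.le_of_le_sup_map hN (by simpa [← hsum] using sup_le h₁ h₂)
  exact .inl (le_antisymm (hsum ▸ le_sup_left) (hcyc.trans bot_le))

theorem stmt3 {V : Type*} [AddCommGroup V] [Module ℂ V] [FiniteDimensional ℂ V]
    (N : V →ₗ[ℂ] V) (hN : IsNilpotent N) (x : V)
    (M₁ M₂ : Submodule ℂ V) (hM₁ : InvSub N M₁) (hM₂ : InvSub N M₂)
    (hsum : M₁ ⊔ M₂ = cyc N x) :
    M₁ = cyc N x ∨ M₂ = cyc N x :=
  stmt3_general N hN x M₁ M₂ hM₁ hM₂ hsum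
end

section
/- Let d be a positive integer and regard the d×d nilpotent Jordan block J_d as a linear endomorphism of ℂ^d via matrix-vector multiplication. Then a d×d complex matrix T (acting on ℂ^d by matrix-vector multiplication) belongs to Col(J_d) if and only if T is invertible and upper triangular. -/
open Submodule

/-- The `n × n` nilpotent Jordan block. -/
def Jmat (n : ℕ) : Matrix (Fin n) (Fin n) ℂ :=
  Matrix.of fun i j => if (j : ℕ) = (i : ℕ) + 1 then 1 else 0

/-!
The `J_d`-invariant subspaces are exactly the coordinate flag `E_0 ⊂ E_1 ⊂ ⋯ ⊂ E_d`,
`E_k = span {e_i | i < k}`, one in each dimension: `J_d` restricted to an invariant `M` is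
nilpotent, hence killed by its `dim M`-th power (Cayley–Hamilton), and `ker J_d ^ k = E_k`.
So a bijection `T` respects invariance iff it maps every `E_k` onto itself (for the converse
direction use that `M ↦ T M` is injective), i.e. iff `T` is invertible and upper triangular.
-/

open Module

theorem IsNilpotent.le_ker_pow_finrank_of_map_le {K V : Type*} [Field K] [AddCommGroup V]
    [Module K V] [FiniteDimensional K V] {A : Module.End K V} (hA : IsNilpotent A)
    {M : Submodule K V} (hM : M.map A ≤ M) : M ≤ LinearMap.ker (A ^ finrank K M) := by
  have hAM : ∀ x ∈ M, A x ∈ M := fun x hx => hM ⟨x, hx, rfl⟩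
  have hnil : IsNilpotent (A.restrict hAM) := Module.End.isNilpotent.restrict hAM hA
  have hpow : A.restrict hAM ^ finrank K M = 0 := by
    simpa [(LinearMap.isNilpotent_iff_charpoly _).mp hnil] using
      (A.restrict hAM).aeval_self_charpoly
  intro x hx
  have := LinearMap.congr_fun hpow ⟨x, hx⟩
  rw [Module.End.pow_restrict, LinearMap.restrict_apply] at this
  simpa using congr_arg Subtype.val this

section CoordFlag

variable {K : Type*} [Field K] {d : ℕ}

variable (K) in
def coordFlag (d k : ℕ) : Submodule K (Fin d → K) :=
  span K (Pi.basisFun K (Fin d) '' {i | (i : ℕ) < k})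

theorem mem_coordFlag {k : ℕ} {x : Fin d → K} :
    x ∈ coordFlag K d k ↔ ∀ i : Fin d, k ≤ i → x i = 0 := by
  rw [coordFlag, Basis.mem_span_image]
  simp [Set.subset_def, not_imp_comm]

theorem coordFlag_le_iff {k : ℕ} {p : Submodule K (Fin d → K)} :
    coordFlag K d k ≤ p ↔ ∀ j : Fin d, (j : ℕ) < k → Pi.single j 1 ∈ p := by
  simp [coordFlag, span_le, Set.subset_def]

theorem finrank_coordFlag {k : ℕ} (hk : k ≤ d) : finrank K (coordFlag K d k) = k := by
  rw [coordFlag, ← Fin.range_castLE hk, ← Set.range_comp,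
    finrank_span_eq_card
      ((Pi.basisFun K (Fin d)).linearIndependent.comp _ (Fin.castLE_injective hk)),
    Fintype.card_fin]

theorem Matrix.map_mulVecLin_coordFlag_le_iff (A : Matrix (Fin d) (Fin d) K) (k : ℕ) :
    (coordFlag K d k).map A.mulVecLin ≤ coordFlag K d k ↔
      ∀ i j : Fin d, (j : ℕ) < k → k ≤ i → A i j = 0 := by
  rw [map_le_iff_le_comap, coordFlag_le_iff]
  simp only [mem_comap, Matrix.mulVecLin_apply, Matrix.mulVec_single_one, mem_coordFlag]
  exact ⟨fun h i j hj hi => h j hj i hi, fun h j hj i hi => h i j hj hi⟩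

theorem Matrix.blockTriangular_id_iff_forall_map_coordFlag_le
    (A : Matrix (Fin d) (Fin d) K) :
    A.BlockTriangular id ↔ ∀ k, (coordFlag K d k).map A.mulVecLin ≤ coordFlag K d k := by
  simp only [Matrix.map_mulVecLin_coordFlag_le_iff]
  refine ⟨fun hA k i j hj hi => hA (show j < i from Fin.lt_def.mpr (by omega)),
    fun hA i j hij => hA (j + 1) i j (Nat.lt_succ_self j) (Fin.lt_def.mp hij)⟩

end CoordFlag

section Jordan

variable {d : ℕ}

theorem Jmat_mulVecLin_apply (x : Fin d → ℂ) (i : Fin d) :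
    (Jmat d).mulVecLin x i = if h : (i : ℕ) + 1 < d then x ⟨i + 1, h⟩ else 0 := by
  simp only [Matrix.mulVecLin_apply, Matrix.mulVec, dotProduct, Jmat, Matrix.of_apply, ite_mul,
    one_mul, zero_mul]
  split_ifs with h
  · rw [Finset.sum_eq_single_of_mem ⟨i + 1, h⟩ (Finset.mem_univ _)]
    · simp
    · intro j _ hj
      exact if_neg fun hji => hj (Fin.ext hji)
  · exact Finset.sum_eq_zero fun j _ => if_neg fun hji => h (by omega)

theorem Jmat_mulVecLin_pow_apply (n : ℕ) (x : Fin d → ℂ) (i : Fin d) :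
    ((Jmat d).mulVecLin ^ n) x i = if h : (i : ℕ) + n < d then x ⟨i + n, h⟩ else 0 := by
  induction n generalizing i with
  | zero => simp
  | succ n ih =>
    rw [pow_succ', Module.End.mul_apply, Jmat_mulVecLin_apply]
    by_cases h : (i : ℕ) + (n + 1) < d
    · simp only [dif_pos h, dif_pos (show (i : ℕ) + 1 < d by omega), ih, Nat.add_assoc,
        Nat.add_comm 1 n]
    · rw [dif_neg h]
      split_ifs with h'
      · rw [ih, dif_neg (by simp only; omega)]
      · rfl

theorem isNilpotent_Jmat_mulVecLin : IsNilpotent (Jmat d).mulVecLin :=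
  ⟨d, LinearMap.ext fun x => funext fun i => by simp [Jmat_mulVecLin_pow_apply]⟩

theorem ker_Jmat_mulVecLin_pow_le_coordFlag (n : ℕ) :
    LinearMap.ker ((Jmat d).mulVecLin ^ n) ≤ coordFlag ℂ d n := by
  intro x hx
  rw [mem_coordFlag]
  intro i hi
  have := congr_fun (LinearMap.mem_ker.mp hx) ⟨i - n, by omega⟩
  simpa [Jmat_mulVecLin_pow_apply, Nat.sub_add_cancel hi] using this

theorem invSub_Jmat_coordFlag (k : ℕ) : InvSub (Jmat d).mulVecLin (coordFlag ℂ d k) :=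
  (Matrix.map_mulVecLin_coordFlag_le_iff _ k).mpr fun i j hj hi => if_neg (by omega)

theorem invSub_Jmat_iff {M : Submodule ℂ (Fin d → ℂ)} :
    InvSub (Jmat d).mulVecLin M ↔ M = coordFlag ℂ d (finrank ℂ M) := by
  refine ⟨fun hM => ?_, fun hM => hM ▸ invSub_Jmat_coordFlag _⟩
  have hle : M ≤ coordFlag ℂ d (finrank ℂ M) :=
    (isNilpotent_Jmat_mulVecLin.le_ker_pow_finrank_of_map_le hM).trans
      (ker_Jmat_mulVecLin_pow_le_coordFlag _)
  refine eq_of_le_of_finrank_eq hle ?_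
  rw [finrank_coordFlag]
  simpa using M.finrank_le

end Jordan

theorem Submodule.map_eq_of_map_le_of_injective {K V : Type*} [Field K] [AddCommGroup V]
    [Module K V] [FiniteDimensional K V] {T : V →ₗ[K] V} (hT : Function.Injective T)
    {M : Submodule K V} (hM : M.map T ≤ M) : M.map T = M :=
  eq_of_le_of_finrank_eq hM (M.equivMapOfInjective T hT).finrank_eq.symm

theorem col_iff_forall_invSub_map_eq {V : Type*} [AddCommGroup V] [Module ℂ V]
    {A T : V →ₗ[ℂ] V}
    (hA : ∀ M N, InvSub A M → InvSub A N → finrank ℂ M = finrank ℂ N → M = N) :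
    Col A T ↔ Function.Bijective T ∧ ∀ M, InvSub A M → M.map T = M := by
  refine ⟨fun ⟨hT, hcol⟩ => ⟨hT, fun M hM => ?_⟩, fun ⟨hT, hfix⟩ => ⟨hT, fun M => ?_⟩⟩
  · exact hA _ _ ((hcol M).mp hM) hM (M.equivMapOfInjective T hT.1).finrank_eq.symm
  · refine ⟨fun hM => (hfix M hM).symm ▸ hM, fun hTM => ?_⟩
    rwa [← map_injective_of_injective hT.1 (hfix _ hTM)]

theorem Matrix.bijective_mulVecLin_iff_isUnit {m K : Type*} [Fintype m] [DecidableEq m]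
    [Field K] (T : Matrix m m K) : Function.Bijective T.mulVecLin ↔ IsUnit T :=
  ⟨fun h => mulVec_injective_iff_isUnit.mp h.1,
    fun h => ⟨mulVec_injective_iff_isUnit.mpr h, mulVec_surjective_iff_isUnit.mpr h⟩⟩

theorem stmt18_general (d : ℕ) (T : Matrix (Fin d) (Fin d) ℂ) :
    Col (Jmat d).mulVecLin T.mulVecLin ↔
      IsUnit T ∧ ∀ i j : Fin d, (j : ℕ) < (i : ℕ) → T i j = 0 := by
  have hdim : ∀ M N, InvSub (Jmat d).mulVecLin M → InvSub (Jmat d).mulVecLin N →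
      finrank ℂ M = finrank ℂ N → M = N := fun M N hM hN h => by
    rw [invSub_Jmat_iff.mp hM, invSub_Jmat_iff.mp hN, h]
  rw [col_iff_forall_invSub_map_eq hdim, T.bijective_mulVecLin_iff_isUnit]
  refine and_congr_right fun hT => ?_
  change _ ↔ T.BlockTriangular id
  rw [T.blockTriangular_id_iff_forall_map_coordFlag_le]
  refine ⟨fun h k => (h _ (invSub_Jmat_coordFlag k)).le, fun h M hM => ?_⟩
  rw [invSub_Jmat_iff.mp hM]
  exact map_eq_of_map_le_of_injective (T.bijective_mulVecLin_iff_isUnit.mpr hT).1 (h _)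

theorem stmt18 (d : ℕ) (hd : 0 < d) (T : Matrix (Fin d) (Fin d) ℂ) :
    Col (Jmat d).mulVecLin T.mulVecLin ↔
      IsUnit T ∧ ∀ i j : Fin d, (j : ℕ) < (i : ℕ) → T i j = 0 :=
  stmt18_general d T
end
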